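/- arXiv:2507.00148 — 2 statements merged into one kernel-verified Lean document; each statement's English description precedes it below -/
import Mathlib

section
/- Let f : {0,1}^n → {0,1}. (1) For every x ∈ {0,u,1}^n with f̃(x) = 1 there is a prime implicant P of f such that s_u(f, x_P) ≥ s_u(f, x), where x_P ∈ {0,u,1}^n is 1 at positions whose positive literal is in P, 0 at positions whose negated literal is in P, and u elsewhere. (2) For every x with f̃(x) = 0 there is a prime implicate Q of f such that s_u(f, x_Q) ≥ s_u(f, x), where x_Q is defined dually (0 at positive literals of Q, 1 at negated literals, u elsewhere). (3) For every x with f̃(x) = u and more than one u-coordinate, there exists y ∈ {0,u,1}^n with exactly one u-coordinate, f̃(y) = u, and s_u(f, y) ≥ s_u(f, x). -/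
attribute [local instance 0] Classical.propDecidable

/-- Ternary values: `none` represents the uncertain value `u`,
`some b` represents the Boolean value `b`. -/
abbrev TVal := Option Bool

/-- The resolutions of `x ∈ {0,u,1}^ι`: all Boolean strings agreeing with
the determined coordinates of `x`. -/
def Res {ι : Type} (x : ι → Option Bool) : Set (ι → Bool) :=
  {y | ∀ i b, x i = some b → y i = b}

/-- The hazard-free extension of a Boolean function `f`. -/
noncomputable def hfext {ι : Type} (f : (ι → Bool) → Bool) (x : ι → Option Bool) :
    Option Bool :=
  if ∀ y ∈ Res x, f y = true then some true
  else if ∀ y ∈ Res x, f y = false then some false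
  else none

/-- Number of uncertain (`u`) coordinates of `x`. -/
noncomputable def uCount {ι : Type} [Fintype ι] (x : ι → Option Bool) : ℕ :=
  (Finset.univ.filter fun i : ι => x i = none).card

/-- u-sensitivity of `f` at `x`: the number of coordinates `i` such that
changing only coordinate `i` can change the value of the hazard-free extension. -/
noncomputable def sensAt {ι : Type} [Fintype ι] (f : (ι → Bool) → Bool)
    (x : ι → Option Bool) : ℕ :=
  (Finset.univ.filter fun i : ι => ∃ y : ι → Option Bool,
      y i ≠ x i ∧ (∀ j, j ≠ i → y j = x j) ∧ hfext f y ≠ hfext f x).card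

/-- u-sensitivity of `f`. -/
noncomputable def sensU {ι : Type} [Fintype ι] [DecidableEq ι]
    (f : (ι → Bool) → Bool) : ℕ :=
  Finset.univ.sup fun x : ι → Option Bool => sensAt f x

/-- u-sensitivity of `f` restricted to inputs whose hazard-free value is `b`. -/
noncomputable def sensULevel {ι : Type} [Fintype ι] [DecidableEq ι]
    (f : (ι → Bool) → Bool) (b : Option Bool) : ℕ :=
  (Finset.univ.filter fun x : ι → Option Bool => hfext f x = b).sup (sensAt f)

/-- Boolean sensitivity of `f` at a Boolean input `x`. -/
noncomputable def boolSensAt {ι : Type} [Fintype ι] [DecidableEq ι]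
    (f : (ι → Bool) → Bool) (x : ι → Bool) : ℕ :=
  (Finset.univ.filter fun i : ι => f (Function.update x i (!x i)) ≠ f x).card

/-- Boolean sensitivity of `f`. -/
noncomputable def boolSens {ι : Type} [Fintype ι] [DecidableEq ι]
    (f : (ι → Bool) → Bool) : ℕ :=
  Finset.univ.sup (boolSensAt f)

/-- There are `k` pairwise disjoint blocks, each of which is sensitive for the
hazard-free extension of `f` at `x`. -/
def HasSensBlocks {ι : Type} (f : (ι → Bool) → Bool) (x : ι → Option Bool)
    (k : ℕ) : Prop :=
  ∃ (B : Fin k → Set ι) (y : Fin k → ι → Option Bool),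
    (∀ j j', j ≠ j' → Disjoint (B j) (B j')) ∧
    ∀ j, (∀ i, y j i ≠ x i ↔ i ∈ B j) ∧ hfext f (y j) ≠ hfext f x

/-- u-block sensitivity of `f`. -/
noncomputable def bsU {ι : Type} (f : (ι → Bool) → Bool) : ℕ :=
  sSup {k | ∃ x, HasSensBlocks f x k}

/-- A ternary string `y` is consistent with a partial assignment
`p : ι → Option (Option Bool)` (`none` = `*`). -/
def Consistent {ι : Type} (y : ι → Option Bool) (p : ι → Option (Option Bool)) :
    Prop :=
  ∀ i v, p i = some v → y i = v

/-- `p` is a certificate for the hazard-free extension of `f` at `x`. -/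
def IsCert {ι : Type} (f : (ι → Bool) → Bool) (x : ι → Option Bool)
    (p : ι → Option (Option Bool)) : Prop :=
  Consistent x p ∧ ∀ y, Consistent y p → hfext f y = hfext f x

/-- Size of a partial assignment: the number of non-`*` coordinates. -/
noncomputable def certSize {ι : Type} [Fintype ι] (p : ι → Option (Option Bool)) :
    ℕ :=
  (Finset.univ.filter fun i : ι => p i ≠ none).card

/-- u-certificate complexity of `f` at `x`. -/
noncomputable def ccAt {ι : Type} [Fintype ι] (f : (ι → Bool) → Bool)
    (x : ι → Option Bool) : ℕ :=
  sInf {k | ∃ p, IsCert f x p ∧ certSize p = k}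

/-- u-certificate complexity of `f`. -/
noncomputable def ccU {ι : Type} [Fintype ι] [DecidableEq ι]
    (f : (ι → Bool) → Bool) : ℕ :=
  Finset.univ.sup fun x : ι → Option Bool => ccAt f x

/-- u-certificate complexity of `f` restricted to inputs with hazard-free value `b`. -/
noncomputable def ccULevel {ι : Type} [Fintype ι] [DecidableEq ι]
    (f : (ι → Bool) → Bool) (b : Option Bool) : ℕ :=
  (Finset.univ.filter fun x : ι → Option Bool => hfext f x = b).sup (ccAt f)

/-- A set of literals (at most one per variable), encoded as a partial Boolean
assignment `q : ι → Option Bool`, is an implicant of `f` if `f` is `true` on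
every Boolean input extending `q`. -/
def IsImplicant {ι : Type} (f : (ι → Bool) → Bool) (q : ι → Option Bool) : Prop :=
  ∀ y : ι → Bool, (∀ i b, q i = some b → y i = b) → f y = true

/-- Dually, an implicate of `f` forces the value `false`. -/
def IsImplicate {ι : Type} (f : (ι → Bool) → Bool) (q : ι → Option Bool) : Prop :=
  ∀ y : ι → Bool, (∀ i b, q i = some b → y i = b) → f y = false

/-- `q'` is a (literal-)subset of `q`. -/
def SubAsn {ι : Type} (q' q : ι → Option Bool) : Prop :=
  ∀ i b, q' i = some b → q i = some b

def IsPrimeImplicant {ι : Type} (f : (ι → Bool) → Bool) (q : ι → Option Bool) :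
    Prop :=
  IsImplicant f q ∧ ∀ q', SubAsn q' q → q' ≠ q → ¬ IsImplicant f q'

def IsPrimeImplicate {ι : Type} (f : (ι → Bool) → Bool) (q : ι → Option Bool) :
    Prop :=
  IsImplicate f q ∧ ∀ q', SubAsn q' q → q' ≠ q → ¬ IsImplicate f q'

/-- Number of literals of a partial assignment. -/
noncomputable def asnSize {ι : Type} [Fintype ι] (q : ι → Option Bool) : ℕ :=
  (Finset.univ.filter fun i : ι => q i ≠ none).card

/-- Ternary decision trees: internal nodes query a variable and branch on the
three possible values `0`, `u`, `1`; leaves output a value in `{0,u,1}`. -/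
inductive TTree (ι : Type) : Type where
  | leaf : Option Bool → TTree ι
  | node : ι → TTree ι → TTree ι → TTree ι → TTree ι

namespace TTree

def eval {ι : Type} : TTree ι → (ι → Option Bool) → Option Bool
  | .leaf b, _ => b
  | .node i t0 tu t1, x =>
    match x i with
    | some false => eval t0 x
    | none => eval tu x
    | some true => eval t1 x

def depth {ι : Type} : TTree ι → ℕ
  | .leaf _ => 0
  | .node _ t0 tu t1 => max (max t0.depth tu.depth) t1.depth + 1

/-- Size of a tree: its number of leaves. -/
def size {ι : Type} : TTree ι → ℕ
  | .leaf _ => 1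
  | .node _ t0 tu t1 => t0.size + tu.size + t1.size

end TTree

/-- Boolean decision trees. -/
inductive BTree (ι : Type) : Type where
  | leaf : Bool → BTree ι
  | node : ι → BTree ι → BTree ι → BTree ι

namespace BTree

def eval {ι : Type} : BTree ι → (ι → Bool) → Bool
  | .leaf b, _ => b
  | .node i t0 t1, x => if x i then eval t1 x else eval t0 x

def depth {ι : Type} : BTree ι → ℕ
  | .leaf _ => 0
  | .node _ t0 t1 => max t0.depth t1.depth + 1

/-- Size of a tree: its number of leaves. -/
def size {ι : Type} : BTree ι → ℕ
  | .leaf _ => 1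
  | .node _ t0 t1 => t0.size + t1.size

end BTree

/-- Deterministic u-query complexity: minimal depth of a ternary decision tree
computing the hazard-free extension of `f`. -/
noncomputable def Du {ι : Type} (f : (ι → Bool) → Bool) : ℕ :=
  sInf {d | ∃ T : TTree ι, (∀ x, T.eval x = hfext f x) ∧ T.depth = d}

/-- Minimal number of leaves of a ternary decision tree computing the
hazard-free extension of `f`. -/
noncomputable def sizeU {ι : Type} (f : (ι → Bool) → Bool) : ℕ :=
  sInf {s | ∃ T : TTree ι, (∀ x, T.eval x = hfext f x) ∧ T.size = s}

/-- Deterministic (Boolean) query complexity of `f`. -/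
noncomputable def Dbool {ι : Type} (f : (ι → Bool) → Bool) : ℕ :=
  sInf {d | ∃ T : BTree ι, (∀ x, T.eval x = f x) ∧ T.depth = d}

/-- Minimal number of leaves of a Boolean decision tree computing `f`. -/
noncomputable def sizeBool {ι : Type} (f : (ι → Bool) → Bool) : ℕ :=
  sInf {s | ∃ T : BTree ι, (∀ x, T.eval x = f x) ∧ T.size = s}

/-- Index type for `MUX_n`: `n` selector bits and `2^n` data bits. -/
abbrev MUXIdx (n : ℕ) := Fin n ⊕ (Fin n → Bool)

/-- The multiplexer function: output the data bit addressed by the selector bits. -/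
def MUX (n : ℕ) (z : MUXIdx n → Bool) : Bool :=
  z (Sum.inr fun i => z (Sum.inl i))

section Aux

variable {n : ℕ}

/-- `q` forces `f` to value `b`. -/
def Forces (f : (Fin n → Bool) → Bool) (q : Fin n → Option Bool) (b : Bool) : Prop :=
  ∀ y : Fin n → Bool, (∀ i c, q i = some c → y i = c) → f y = b

lemma res_nonempty (x : Fin n → Option Bool) : ∃ z, z ∈ Res x :=
  ⟨fun i => (x i).getD false, fun i b h => by simp [h]⟩

lemma hfext_eq_some_iff (f : (Fin n → Bool) → Bool) (x : Fin n → Option Bool) (b : Bool) :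
    hfext f x = some b ↔ ∀ y ∈ Res x, f y = b := by
  obtain ⟨z, hz⟩ := res_nonempty x
  unfold hfext
  split_ifs with h1 h2
  · cases b
    · exact iff_of_false (by simp) (fun h => by
        have h1' := h1 z hz; have h2' := h z hz; simp [h2'] at h1')
    · exact iff_of_true rfl h1
  · cases b
    · exact iff_of_true rfl h2
    · exact iff_of_false (by simp) h1
  · cases b
    · exact iff_of_false (by simp) h2
    · exact iff_of_false (by simp) h1

lemma hfext_eq_none_iff (f : (Fin n → Bool) → Bool) (x : Fin n → Option Bool) :
    hfext f x = none ↔ (∃ z ∈ Res x, f z = true) ∧ (∃ z ∈ Res x, f z = false) := by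
  unfold hfext
  split_ifs with h1 h2
  · simp only [reduceCtorEq, false_iff]
    rintro ⟨-, z, hz, hfz⟩
    exact absurd ((h1 z hz).symm.trans hfz) (by simp)
  · simp only [reduceCtorEq, false_iff]
    rintro ⟨⟨z, hz, hfz⟩, -⟩
    exact absurd ((h2 z hz).symm.trans hfz) (by simp)
  · simp only [true_iff]
    push_neg at h1 h2
    obtain ⟨z1, hz1, hfz1⟩ := h1
    obtain ⟨z2, hz2, hfz2⟩ := h2
    exact ⟨⟨z2, hz2, by simpa using hfz2⟩, ⟨z1, hz1, by simpa using hfz1⟩⟩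

lemma forces_iff (f : (Fin n → Bool) → Bool) (q : Fin n → Option Bool) (b : Bool) :
    Forces f q b ↔ hfext f q = some b := by
  rw [hfext_eq_some_iff]; rfl

lemma exists_res_ne (f : (Fin n → Bool) → Bool) {y : Fin n → Option Bool} {b : Bool}
    (h : hfext f y ≠ some b) : ∃ z ∈ Res y, f z = !b := by
  by_contra hcon
  push_neg at hcon
  apply h
  rw [hfext_eq_some_iff]
  intro z hz
  have := hcon z hz
  cases hb : f z <;> cases b <;> simp_all

lemma sens_mono (f : (Fin n → Bool) → Bool) {q x : Fin n → Option Bool} {b : Bool}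
    (hsub : SubAsn q x) (hq : hfext f q = some b) (hx : hfext f x = some b) :
    sensAt f x ≤ sensAt f q := by
  unfold sensAt
  apply Finset.card_le_card
  intro i hi
  simp only [Finset.mem_filter, Finset.mem_univ, true_and] at hi ⊢
  obtain ⟨y, hyi, hyj, hyv⟩ := hi
  rw [hx] at hyv
  obtain ⟨z, hzy, hzb⟩ := exists_res_ne f hyv
  have hzres : ∀ w : Fin n → Option Bool, (∀ j, j ≠ i → w j = q j) →
      (∀ c, w i = some c → z i = c) → hfext f w ≠ hfext f q := by
    intro w hwj hwi
    rw [hq]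
    intro hcontra
    rw [hfext_eq_some_iff] at hcontra
    have hzw : z ∈ Res w := by
      intro j c hjc
      by_cases hji : j = i
      · subst hji; exact hwi c hjc
      · rw [hwj j hji] at hjc
        exact hzy j c (by rw [hyj j hji]; exact hsub j c hjc)
    have := hcontra z hzw
    simp_all
  by_cases hcase : q i = x i
  · refine ⟨Function.update q i (y i),
      by rw [Function.update_self, hcase]; exact hyi,
      fun j hj => Function.update_of_ne hj _ _, ?_⟩
    apply hzres
    · intro j hj; exact Function.update_of_ne hj _ _
    · intro c hc; rw [Function.update_self] at hc; exact hzy i c hc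
  · have hqi : q i = none := by
      cases hqi' : q i with
      | none => rfl
      | some c => exact absurd ((hsub i c hqi') ▸ hqi') hcase
    refine ⟨Function.update q i (some (z i)),
      by rw [Function.update_self, hqi]; simp,
      fun j hj => Function.update_of_ne hj _ _, ?_⟩
    apply hzres
    · intro j hj; exact Function.update_of_ne hj _ _
    · intro c hc; rw [Function.update_self] at hc
      exact Option.some_inj.mp hc

lemma exists_prime (f : (Fin n → Bool) → Bool) (b : Bool) (x : Fin n → Option Bool)
    (hx : hfext f x = some b) :
    ∃ P : Fin n → Option Bool,
      (Forces f P b ∧ ∀ q', SubAsn q' P → q' ≠ P → ¬ Forces f q' b) ∧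
      sensAt f x ≤ sensAt f P := by
  have hne : (Finset.univ.filter fun q : Fin n → Option Bool =>
      SubAsn q x ∧ Forces f q b).Nonempty := by
    refine ⟨x, ?_⟩
    simp only [Finset.mem_filter, Finset.mem_univ, true_and]
    exact ⟨fun i c h => h, (forces_iff f x b).mpr hx⟩
  obtain ⟨P, hPmem, hPmin⟩ := Finset.exists_min_image _ asnSize hne
  simp only [Finset.mem_filter, Finset.mem_univ, true_and] at hPmem
  obtain ⟨hPsub, hPf⟩ := hPmem
  refine ⟨P, ⟨hPf, ?_⟩, sens_mono f hPsub ((forces_iff f P b).mp hPf) hx⟩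
  intro q' hsub hne' hforce
  have hmem : q' ∈ Finset.univ.filter fun q : Fin n → Option Bool =>
      SubAsn q x ∧ Forces f q b := by
    simp only [Finset.mem_filter, Finset.mem_univ, true_and]
    exact ⟨fun i c h => hPsub i c (hsub i c h), hforce⟩
  have hle := hPmin q' hmem
  have hlt : asnSize q' < asnSize P := by
    unfold asnSize
    apply Finset.card_lt_card
    rw [Finset.ssubset_iff_of_subset]
    · obtain ⟨i, hi⟩ := Function.ne_iff.mp hne'
      have hq'i : q' i = none := by
        cases hq : q' i with
        | none => rfl
        | some c => exact absurd ((hsub i c hq) ▸ hq) hi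
      have hPi : P i ≠ none := by
        intro hP
        exact hi (hq'i.trans hP.symm)
      exact ⟨i, by simp [hPi], by simp [hq'i]⟩
    · intro i hi
      simp only [Finset.mem_filter, Finset.mem_univ, true_and] at hi ⊢
      cases hq : q' i with
      | none => exact absurd hq hi
      | some c => rw [hsub i c hq]; simp
  omega

lemma uCount_update (x : Fin n → Option Bool) (k : Fin n) (c : Bool) (hk : x k = none) :
    uCount (Function.update x k (some c)) = uCount x - 1 := by
  unfold uCount
  have heq : (Finset.univ.filter fun i => Function.update x k (some c) i = none)
      = (Finset.univ.filter fun i => x i = none).erase k := by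
    ext i
    simp only [Finset.mem_filter, Finset.mem_univ, true_and, Finset.mem_erase]
    constructor
    · intro h
      by_cases hik : i = k
      · subst hik; simp [Function.update_self] at h
      · rw [Function.update_of_ne hik] at h; exact ⟨hik, h⟩
    · rintro ⟨hik, h⟩
      rw [Function.update_of_ne hik]; exact h
  rw [heq, Finset.card_erase_of_mem (by simp [hk])]

lemma step_sens (f : (Fin n → Bool) → Bool) (x : Fin n → Option Bool) (k : Fin n) (c : Bool)
    (hk : x k = none) (hx : hfext f x = none)
    (hx' : hfext f (Function.update x k (some c)) = none) :
    sensAt f x ≤ sensAt f (Function.update x k (some c)) := by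
  unfold sensAt
  apply Finset.card_le_card
  intro i hi
  simp only [Finset.mem_filter, Finset.mem_univ, true_and] at hi ⊢
  obtain ⟨y, hyi, hyj, hyv⟩ := hi
  rw [hx] at hyv
  obtain ⟨b, hb⟩ : ∃ b, hfext f y = some b := by
    cases h : hfext f y with
    | none => exact absurd h hyv
    | some b => exact ⟨b, rfl⟩
  by_cases hik : i = k
  · subst hik
    obtain ⟨d, hd⟩ : ∃ d, y i = some d := by
      cases h : y i with
      | none => exact absurd (h.trans hk.symm) hyi
      | some d => exact ⟨d, rfl⟩
    have hdc : d ≠ c := by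
      intro hdc
      subst hdc
      have : y = Function.update x i (some d) := by
        funext j
        by_cases hji : j = i
        · subst hji; rw [hd, Function.update_self]
        · rw [Function.update_of_ne hji]; exact hyj j hji
      rw [this, hx'] at hb
      exact absurd hb (by simp)
    refine ⟨y, ?_, ?_, ?_⟩
    · rw [hd, Function.update_self]; simp [hdc]
    · intro j hj; rw [Function.update_of_ne hj]; exact hyj j hj
    · rw [hb, hx']; simp
  · refine ⟨Function.update y k (some c), ?_, ?_, ?_⟩
    · rw [Function.update_of_ne (Ne.symm (fun h => hik h.symm)),
        Function.update_of_ne (Ne.symm (fun h => hik h.symm))]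
      exact hyi
    · intro j hj
      by_cases hjk : j = k
      · subst hjk; rw [Function.update_self, Function.update_self]
      · rw [Function.update_of_ne hjk, Function.update_of_ne hjk]; exact hyj j hj
    · rw [hx']
      rw [hfext_eq_some_iff] at hb
      have : hfext f (Function.update y k (some c)) = some b := by
        rw [hfext_eq_some_iff]
        intro z hz
        refine hb z ?_
        intro j d hjd
        apply hz
        have hjk : j ≠ k := by
          intro h
          rw [h, hyj k (fun hh => hik hh.symm), hk] at hjd
          exact absurd hjd (by simp)
        rw [Function.update_of_ne hjk]; exact hjd
      rw [this]; simp

lemma step_exists (f : (Fin n → Bool) → Bool) (x : Fin n → Option Bool)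
    (hx : hfext f x = none) (h2 : 1 < uCount x) :
    ∃ k c, x k = none ∧ hfext f (Function.update x k (some c)) = none := by
  by_contra hcon
  push_neg at hcon
  obtain ⟨k, hkmem, k', hk'mem, hkk'⟩ :=
    Finset.one_lt_card.mp (show 1 < (Finset.univ.filter fun i => x i = none).card from h2)
  simp only [Finset.mem_filter, Finset.mem_univ, true_and] at hkmem hk'mem
  obtain ⟨b0, hb0⟩ : ∃ b, hfext f (Function.update x k (some false)) = some b := by
    cases h : hfext f (Function.update x k (some false)) with
    | none => exact absurd h (hcon k false hkmem)
    | some b => exact ⟨b, rfl⟩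
  obtain ⟨b1, hb1⟩ : ∃ b, hfext f (Function.update x k (some true)) = some b := by
    cases h : hfext f (Function.update x k (some true)) with
    | none => exact absurd h (hcon k true hkmem)
    | some b => exact ⟨b, rfl⟩
  rw [hfext_eq_some_iff] at hb0 hb1
  -- membership helper
  have hres : ∀ (c c' : Bool), ∃ z, z ∈ Res (Function.update x k (some c)) ∧
      z ∈ Res (Function.update x k' (some c')) := by
    intro c c'
    obtain ⟨z, hz⟩ := res_nonempty (Function.update (Function.update x k (some c)) k' (some c'))
    refine ⟨z, ?_, ?_⟩
    · intro j d hjd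
      by_cases hjk' : j = k'
      · subst hjk'
        rw [Function.update_of_ne (fun h => hkk' h.symm), hk'mem] at hjd
        exact absurd hjd (by simp)
      · exact hz j d (by rw [Function.update_of_ne hjk']; exact hjd)
    · intro j d hjd
      by_cases hjk' : j = k'
      · subst hjk'
        rw [Function.update_self] at hjd
        exact hz j d (by rw [Function.update_self]; exact hjd)
      · rw [Function.update_of_ne hjk'] at hjd
        by_cases hjk : j = k
        · subst hjk; rw [hkmem] at hjd; exact absurd hjd (by simp)
        · exact hz j d (by
            rw [Function.update_of_ne hjk', Function.update_of_ne hjk]; exact hjd)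
  by_cases hbb : b0 = b1
  · -- f is constant b0 on Res x, contradicting hfext x = none
    subst hbb
    have : hfext f x = some b0 := by
      rw [hfext_eq_some_iff]
      intro z hz
      have hzres : z ∈ Res (Function.update x k (some (z k))) := by
        intro j d hjd
        by_cases hjk : j = k
        · subst hjk; rw [Function.update_self] at hjd
          exact Option.some_inj.mp hjd
        · rw [Function.update_of_ne hjk] at hjd; exact hz j d hjd
      cases hzk : z k with
      | false => rw [hzk] at hzres; exact hb0 z hzres
      | true => rw [hzk] at hzres; exact hb1 z hzres
    rw [this] at hx; exact absurd hx (by simp)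
  · -- hfext at x[k' := c'] is none for any c', contradiction
    have : hfext f (Function.update x k' (some false)) = none := by
      rw [hfext_eq_none_iff]
      obtain ⟨z0, hz0k, hz0k'⟩ := hres false false
      obtain ⟨z1, hz1k, hz1k'⟩ := hres true false
      have hf0 := hb0 z0 hz0k
      have hf1 := hb1 z1 hz1k
      cases b0 with
      | false =>
        cases b1 with
        | false => exact absurd rfl hbb
        | true => exact ⟨⟨z1, hz1k', hf1⟩, ⟨z0, hz0k', hf0⟩⟩
      | true =>
        cases b1 with
        | false => exact ⟨⟨z0, hz0k', hf0⟩, ⟨z1, hz1k', hf1⟩⟩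
        | true => exact absurd rfl hbb
    exact hcon k' false hk'mem this

lemma part3aux (f : (Fin n → Bool) → Bool) :
    ∀ m (x : Fin n → Option Bool), uCount x ≤ m + 2 → hfext f x = none → 1 < uCount x →
    ∃ y : Fin n → Option Bool, uCount y = 1 ∧ hfext f y = none ∧ sensAt f x ≤ sensAt f y := by
  intro m
  induction m with
  | zero =>
    intro x hle hx h1
    obtain ⟨k, c, hk, hx'⟩ := step_exists f x hx h1
    exact ⟨Function.update x k (some c),
      by rw [uCount_update x k c hk]; omega, hx', step_sens f x k c hk hx hx'⟩
  | succ m ih =>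
    intro x hle hx h1
    by_cases h : uCount x ≤ m + 2
    · exact ih x h hx h1
    · obtain ⟨k, c, hk, hx'⟩ := step_exists f x hx h1
      have hcnt : uCount (Function.update x k (some c)) = uCount x - 1 := uCount_update x k c hk
      obtain ⟨y, h1', h2', h3'⟩ := ih _ (by omega) hx' (by omega)
      exact ⟨y, h1', h2', le_trans (step_sens f x k c hk hx hx') h3'⟩

end Aux

/-- Where u-sensitivity is maximized: (1) among 1-inputs, at prime implicants
(viewing a prime implicant `P`, a partial assignment, directly as the ternary
string `x_P` which is `u` off the domain of `P`); (2) among 0-inputs, at prime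
implicates; (3) among u-inputs, at inputs with exactly one `u` coordinate. -/
theorem stmt4 {n : ℕ} (f : (Fin n → Bool) → Bool) :
    (∀ x : Fin n → Option Bool, hfext f x = some true →
      ∃ P : Fin n → Option Bool, IsPrimeImplicant f P ∧ sensAt f x ≤ sensAt f P) ∧
    (∀ x : Fin n → Option Bool, hfext f x = some false →
      ∃ Q : Fin n → Option Bool, IsPrimeImplicate f Q ∧ sensAt f x ≤ sensAt f Q) ∧
    (∀ x : Fin n → Option Bool, hfext f x = none → 1 < uCount x →
      ∃ y : Fin n → Option Bool,
        uCount y = 1 ∧ hfext f y = none ∧ sensAt f x ≤ sensAt f y) := by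
  refine ⟨?_, ?_, ?_⟩
  · intro x hx
    obtain ⟨P, ⟨h1, h2⟩, h3⟩ := exists_prime f true x hx
    exact ⟨P, ⟨h1, h2⟩, h3⟩
  · intro x hx
    obtain ⟨Q, ⟨h1, h2⟩, h3⟩ := exists_prime f false x hx
    exact ⟨Q, ⟨h1, h2⟩, h3⟩
  · intro x hx h1
    exact part3aux f (uCount x) x (by omega) hx h1
end

section
/- For every n ≥ 1, the deterministic u-query complexity of MUX_n equals 2^n + n; that is, the minimum depth of a ternary decision tree computing the hazard-free extension of MUX_n is exactly 2^n + n. -/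
attribute [local instance 0] Classical.propDecidable

/-!
Querying every variable always suffices. For the matching lower bound, an adversary answers `u` on
every selector and `0` on every data bit except the last unqueried one, which it answers `u`.
While some data bit is unqueried, completing the answers with `0` gives the value `0`, whereas
pointing the free selectors at an unqueried data bit set to `1` does not. Once all data bits are
answered, the one answered `u` is the only address not forced to `0`, and an unqueried selector
can still exclude it or not. So no variable can be skipped.
-/

open Finset

section HazardFree

variable {ι : Type}

lemma getD_mem_Res (x : ι → Option Bool) (d : ι → Bool) :
    (fun i => (x i).getD (d i)) ∈ Res x := by
  intro i b h
  simp [h]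

lemma hfext_eq_some_false_iff (f : (ι → Bool) → Bool) (x : ι → Option Bool) :
    hfext f x = some false ↔ ∀ y ∈ Res x, f y = false := by
  unfold hfext
  have hy := getD_mem_Res x fun _ => false
  split_ifs with htrue hfalse
  · simpa using ⟨_, hy, htrue _ hy⟩
  · simpa using hfalse
  · simpa using hfalse

lemma Consistent.getD (p : ι → Option (Option Bool)) (d : ι → Option Bool) :
    Consistent (fun i => (p i).getD (d i)) p := by
  intro i v h
  simp [h]

end HazardFree

namespace TTree

variable {ι : Type}

def child (t0 tu t1 : TTree ι) : Option Bool → TTree ι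
  | some false => t0
  | none => tu
  | some true => t1

lemma eval_node (i : ι) (t0 tu t1 : TTree ι) (x : ι → Option Bool) :
    (node i t0 tu t1).eval x = (child t0 tu t1 (x i)).eval x := by
  rcases h : x i with _ | _ | _ <;> simp [eval, child, h]

lemma depth_child_lt (i : ι) (t0 tu t1 : TTree ι) (v : Option Bool) :
    (child t0 tu t1 v).depth < (node i t0 tu t1).depth := by
  rcases v with _ | _ | _ <;> simp only [child, depth] <;> omega

variable [DecidableEq ι]

def queryAll (g : (ι → Option Bool) → Option Bool) :
    List ι → (ι → Option Bool) → TTree ι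
  | [], acc => leaf (g acc)
  | i :: l, acc =>
    node i (queryAll g l (Function.update acc i (some false)))
      (queryAll g l (Function.update acc i none))
      (queryAll g l (Function.update acc i (some true)))

lemma depth_queryAll (g : (ι → Option Bool) → Option Bool) (l : List ι)
    (acc : ι → Option Bool) : (queryAll g l acc).depth = l.length := by
  induction l generalizing acc with
  | nil => rfl
  | cons i l ih => simp [queryAll, depth, ih]

lemma eval_queryAll (g : (ι → Option Bool) → Option Bool) (l : List ι)
    (acc x : ι → Option Bool) (hx : ∀ j ∉ l, x j = acc j) : (queryAll g l acc).eval x = g x := by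
  induction l generalizing acc with
  | nil =>
    have : acc = x := funext fun j => (hx j List.not_mem_nil).symm
    simp [queryAll, eval, this]
  | cons i l ih =>
    have hchild : ∀ v, child (queryAll g l (Function.update acc i (some false)))
        (queryAll g l (Function.update acc i none))
        (queryAll g l (Function.update acc i (some true))) v =
          queryAll g l (Function.update acc i v) := by
      rintro (_ | _ | _) <;> rfl
    rw [queryAll, eval_node, hchild]
    refine ih _ fun j hj => ?_
    by_cases hji : j = i
    · subst hji; simp
    · rw [Function.update_of_ne hji]
      exact hx j (by simp [hji, hj])

end TTree

section Adversary

variable {ι : Type} [Fintype ι] [DecidableEq ι]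

/-- The states in `S` are partial assignments, `none` marking an unqueried variable. -/
def IsAdversary (g : (ι → Option Bool) → Option Bool) (S : Set (ι → Option (Option Bool))) :
    Prop :=
  (∀ p ∈ S, (∃ i, p i = none) → ∃ x y, Consistent x p ∧ Consistent y p ∧ g x ≠ g y) ∧
  ∀ p ∈ S, ∀ i, p i = none → ∃ v, Function.update p i (some v) ∈ S

lemma card_unqueried_update (p : ι → Option (Option Bool)) (i : ι) (hi : p i = none)
    (v : Option Bool) :
    #{j | Function.update p i (some v) j = none} + 1 = #{j | p j = none} := by
  have : ({j | Function.update p i (some v) j = none} : Finset ι) =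
      ({j | p j = none} : Finset ι).erase i := by
    ext j
    by_cases hj : j = i
    · subst hj; simp
    · simp [hj]
  rw [this, card_erase_add_one (by simpa using hi)]

theorem IsAdversary.card_unqueried_le_depth {g : (ι → Option Bool) → Option Bool}
    {S : Set (ι → Option (Option Bool))} (hS : IsAdversary g S) (T : TTree ι) :
    ∀ p ∈ S, (∀ x, Consistent x p → T.eval x = g x) → #{i | p i = none} ≤ T.depth := by
  induction T with
  | leaf b =>
    intro p hp hT
    by_contra hfree
    obtain ⟨i, hi⟩ := card_pos.mp (Nat.lt_of_not_le hfree)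
    obtain ⟨x, y, hx, hy, hne⟩ := hS.1 p hp ⟨i, by simpa using hi⟩
    exact hne ((hT x hx).symm.trans (hT y hy))
  | node i t0 tu t1 ih0 ihu ih1 =>
    have ih : ∀ v, ∀ p ∈ S, (∀ x, Consistent x p → (TTree.child t0 tu t1 v).eval x = g x) →
        #{i | p i = none} ≤ (TTree.child t0 tu t1 v).depth := by
      rintro (_ | _ | _)
      exacts [ihu, ih0, ih1]
    intro p hp hT
    have hlt := TTree.depth_child_lt i t0 tu t1
    rcases hpi : p i with _ | v
    · obtain ⟨v, hv⟩ := hS.2 p hp i hpi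
      have hchild := ih v _ hv fun x hx => by
        have hxi : x i = v := hx i v (by simp)
        have hxp : Consistent x p := fun j w hj => hx j w (by
          rw [Function.update_of_ne (by rintro rfl; simp [hpi] at hj)]; exact hj)
        rw [← hT x hxp, TTree.eval_node, hxi]
      have hcard := card_unqueried_update p i hpi v
      have hdepth := hlt v
      omega
    · have hchild := ih v p hp fun x hx => by
        rw [← hT x hx, TTree.eval_node, hx i v hpi]
      exact le_trans hchild (hlt v).le

theorem Du_eq_card_of_isAdversary {f : (ι → Bool) → Bool} {S : Set (ι → Option (Option Bool))}
    (hS : IsAdversary (hfext f) S) (hunqueried : (fun _ => none) ∈ S) : Du f = Fintype.card ι := by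
  have hmem : Fintype.card ι ∈
      {d | ∃ T : TTree ι, (∀ x, T.eval x = hfext f x) ∧ T.depth = d} :=
    ⟨TTree.queryAll (hfext f) univ.toList fun _ => none,
      fun x => TTree.eval_queryAll _ _ _ x fun j hj => absurd (mem_toList.mpr (mem_univ j)) hj,
      by simp [TTree.depth_queryAll]⟩
  refine le_antisymm (Nat.sInf_le hmem) (le_csInf ⟨_, hmem⟩ ?_)
  rintro d ⟨T, hT, rfl⟩
  simpa using hS.card_unqueried_le_depth T _ hunqueried fun x _ => hT x

end Adversary

section MUX

variable {n : ℕ}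

lemma hfext_MUX_eq_some_false_iff (x : MUXIdx n → Option Bool) :
    hfext (MUX n) x = some false ↔
      ∀ w : Fin n → Bool, (∃ i, x (.inl i) = some (!w i)) ∨ x (.inr w) = some false := by
  rw [hfext_eq_some_false_iff]
  constructor
  · intro h w
    by_contra! hw
    obtain ⟨hsel, hdata⟩ := hw
    have haddr : (fun i => (x (.inl i)).getD (w i)) = w := funext fun i => by
      have := hsel i
      rcases hxi : x (.inl i) with _ | b
      · rfl
      · rw [hxi] at this
        revert this
        cases b <;> cases w i <;> simp
    have := h _ (getD_mem_Res x (Sum.elim w fun _ => true))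
    rcases hxw : x (.inr w) with _ | b
    · simp_all [MUX]
    · cases b <;> simp_all [MUX]
  · intro h y hy
    rcases h (fun i => y (.inl i)) with ⟨i, hi⟩ | hw
    · simpa using hy _ _ hi
    · exact hy _ _ hw

lemma hfext_MUX_ne_some_false_of_unexcluded (x : MUXIdx n → Option Bool) (w : Fin n → Bool)
    (hsel : ∀ i, x (.inl i) ≠ some (!w i)) (hw : x (.inr w) ≠ some false) :
    hfext (MUX n) x ≠ some false := by
  rw [Ne, hfext_MUX_eq_some_false_iff]
  exact fun h => (h w).elim (fun ⟨i, hi⟩ => hsel i hi) hw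

def muxAdversary (n : ℕ) : Set (MUXIdx n → Option (Option Bool)) :=
  {p | (∀ i, p (.inl i) = none ∨ p (.inl i) = some none) ∧
    ((∃ w, p (.inr w) = none) ∧ (∀ w, p (.inr w) = none ∨ p (.inr w) = some (some false)) ∨
      ∃ w, p (.inr w) = some none ∧ ∀ w' ≠ w, p (.inr w') = some (some false))}

def completeToward (p : MUXIdx n → Option (Option Bool)) (w : Fin n → Bool) :
    MUXIdx n → Option Bool :=
  fun k => (p k).getD (Sum.elim (fun i => some (w i)) (fun _ => some true) k)

lemma hfext_MUX_completeToward_ne_some_false (p : MUXIdx n → Option (Option Bool))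
    (hsel : ∀ i, p (.inl i) = none ∨ p (.inl i) = some none) (w : Fin n → Bool)
    (hw : p (.inr w) = none ∨ p (.inr w) = some none) :
    hfext (MUX n) (completeToward p w) ≠ some false := by
  refine hfext_MUX_ne_some_false_of_unexcluded _ w (fun i => ?_) ?_
  · rcases hsel i with h | h <;> simp [completeToward, h]
  · rcases hw with h | h <;> simp [completeToward, h]

lemma muxAdversary_undetermined (p : MUXIdx n → Option (Option Bool)) (hp : p ∈ muxAdversary n)
    (hfree : ∃ k, p k = none) :
    ∃ x y, Consistent x p ∧ Consistent y p ∧ hfext (MUX n) x ≠ hfext (MUX n) y := by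
  obtain ⟨hsel, ⟨⟨w, hw⟩, hdata⟩ | ⟨w, hw, hrest⟩⟩ := hp
  · refine ⟨fun k => (p k).getD (some false), completeToward p w,
      Consistent.getD p _, Consistent.getD p _, ?_⟩
    rw [(hfext_MUX_eq_some_false_iff _).mpr fun w' =>
      .inr (by rcases hdata w' with h | h <;> simp [h])]
    exact (hfext_MUX_completeToward_ne_some_false p hsel w (.inl hw)).symm
  · obtain ⟨j | w', hk⟩ := hfree
    · refine ⟨fun k => (p k).getD
        (Sum.elim (fun i => some (if i = j then !w i else w i)) (fun _ => some false) k),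
        completeToward p w, Consistent.getD p _, Consistent.getD p _, ?_⟩
      rw [(hfext_MUX_eq_some_false_iff _).mpr fun w' => ?_]
      · exact (hfext_MUX_completeToward_ne_some_false p hsel w (.inr hw)).symm
      by_cases hw' : w' = w
      · exact .inl ⟨j, by simp [hk, hw']⟩
      · exact .inr (by simp [hrest w' hw'])
    · by_cases hw' : w' = w
      · simp [hw', hw] at hk
      · simp [hrest w' hw'] at hk

lemma muxAdversary_answer (p : MUXIdx n → Option (Option Bool)) (hp : p ∈ muxAdversary n)
    (k : MUXIdx n) (hk : p k = none) : ∃ v, Function.update p k (some v) ∈ muxAdversary n := by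
  obtain ⟨hsel, hdata⟩ := hp
  rcases k with j | w
  · refine ⟨none, fun i => ?_, by simpa [Function.update_apply] using hdata⟩
    by_cases hi : i = j <;> simp [hi, hsel i]
  · obtain ⟨-, hdata⟩ : _ ∧ ∀ w, p (.inr w) = none ∨ p (.inr w) = some (some false) := by
      refine hdata.resolve_right ?_
      rintro ⟨w', hw', hrest⟩
      by_cases hww' : w = w'
      · simp [hww', hw'] at hk
      · simp [hrest w hww'] at hk
    by_cases hlast : ∃ w' ≠ w, p (.inr w') = none
    · obtain ⟨w', hw'w, hw'⟩ := hlast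
      refine ⟨some false, by simpa [Function.update_apply] using hsel,
        .inl ⟨⟨w', ?_⟩, fun w'' => ?_⟩⟩
      · simp [hw'w, hw']
      · by_cases h : w'' = w <;> simp [h, hdata w'']
    · push Not at hlast
      refine ⟨none, by simpa [Function.update_apply] using hsel,
        .inr ⟨w, by simp, fun w' hw' => ?_⟩⟩
      simpa [hw', hlast w' hw'] using hdata w'

lemma isAdversary_muxAdversary : IsAdversary (hfext (MUX n)) (muxAdversary n) :=
  ⟨muxAdversary_undetermined, muxAdversary_answer⟩

lemma unqueried_mem_muxAdversary : (fun _ => none) ∈ muxAdversary n :=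
  ⟨fun _ => .inl rfl, .inl ⟨⟨fun _ => false, rfl⟩, fun _ => .inl rfl⟩⟩

end MUX

theorem stmt11_general (n : ℕ) :
    Du (MUX n) = 2^n + n := by
  rw [Du_eq_card_of_isAdversary isAdversary_muxAdversary unqueried_mem_muxAdversary]
  simp [add_comm]

/-- The deterministic u-query complexity of `MUX_n` is exactly `2^n + n`. -/
theorem stmt11 (n : ℕ) (hn : 1 ≤ n) :
    Du (MUX n) = 2^n + n :=
  stmt11_general n
end
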